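/- arXiv:1806.05928 — 2 statements merged into one kernel-verified Lean document; each statement's English description precedes it below -/
import Mathlib

section
/- If X is a Type I Pareto random variable with distribution function F(x) = 1 - (x/x₀)^(-α) for x ≥ x₀ > 0 and α > 1, then the Zenga inequality curve λ(p) = 1 - log(1 - L(p))/log(1 - p) is constant equal to 1/α for all p ∈ (0,1), where L(p) = (1/μ)∫₀ᵖ F⁻¹(t) dt is the Lorenz curve and μ = E[X]. -/
open Real MeasureTheory intervalIntegral

/-- For the Type I Pareto distribution with parameters `α > 1` and `x₀ > 0`,
the Zenga inequality curve `λ(p) = 1 - log(1 - L(p))/log(1 - p)` is constantly `1/α`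
on `(0,1)`, where `L(p) = (1/μ) ∫₀ᵖ F⁻¹(t) dt`, `F⁻¹(p) = x₀ (1-p)^{-1/α}`,
and `μ = α x₀ / (α - 1)`. -/
theorem zenga_constant_pareto (α x₀ : ℝ) (hα : 1 < α) (hx₀ : 0 < x₀)
    (μ : ℝ) (hμ : μ = α * x₀ / (α - 1))
    (Finv : ℝ → ℝ) (hFinv : ∀ p ∈ Set.Ioo (0:ℝ) 1, Finv p = x₀ * (1 - p) ^ (-(1/α)))
    (L : ℝ → ℝ) (hL : ∀ p ∈ Set.Ioo (0:ℝ) 1, L p = (1/μ) * ∫ t in (0:ℝ)..p, Finv t)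
    (lam : ℝ → ℝ)
    (hlam : ∀ p ∈ Set.Ioo (0:ℝ) 1, lam p = 1 - Real.log (1 - L p) / Real.log (1 - p)) :
    ∀ p ∈ Set.Ioo (0:ℝ) 1, lam p = 1 / α := by
  intro p hp
  obtain ⟨hp0, hp1⟩ := hp
  have hα0 : (0:ℝ) < α := lt_trans one_pos hα
  have hαm1 : (0:ℝ) < α - 1 := by linarith
  have h1p : (0:ℝ) < 1 - p := by linarith
  have h1p1 : 1 - p < 1 := by linarith
  have hμ0 : 0 < μ := by rw [hμ]; positivity
  -- Step 1: replace Finv by the explicit formula (a.e. on (0,p])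
  have hcong : ∫ t in (0:ℝ)..p, Finv t = ∫ t in (0:ℝ)..p, x₀ * (1 - t) ^ (-(1/α)) := by
    apply intervalIntegral.integral_congr_ae
    have hnull : (volume : Measure ℝ) {p} = 0 := measure_singleton p
    filter_upwards [compl_mem_ae_iff.mpr hnull] with t ht htI
    rw [Set.uIoc_of_le hp0.le] at htI
    have htp : t < p := lt_of_le_of_ne htI.2 ht
    exact hFinv t ⟨htI.1, htp.trans hp1⟩
  -- Step 2: compute the integral
  have hexp : -(1/α) + 1 = (α - 1)/α := by field_simp; ring
  have hint : ∫ t in (0:ℝ)..p, x₀ * (1 - t) ^ (-(1/α))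
      = x₀ * ((1 - (1-p) ^ ((α-1)/α)) / ((α-1)/α)) := by
    rw [intervalIntegral.integral_const_mul]
    congr 1
    have := intervalIntegral.integral_comp_sub_left (a := (0:ℝ)) (b := p)
      (fun x => x ^ (-(1/α))) 1
    simp only [sub_zero] at this
    rw [this]
    rw [integral_rpow (Or.inl (by rw [neg_lt_neg_iff]; exact (div_lt_one hα0).mpr hα))]
    rw [hexp]
    rw [Real.one_rpow]
  -- Step 3: L p = 1 - (1-p)^((α-1)/α)
  have hLp : L p = 1 - (1 - p) ^ ((α-1)/α) := by
    rw [hL p ⟨hp0, hp1⟩, hcong, hint, hμ]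
    have hαne : α ≠ 0 := hα0.ne'
    field_simp
  -- Step 4: logs
  have hlog1p : Real.log (1 - p) ≠ 0 := by
    exact ne_of_lt (Real.log_neg h1p h1p1)
  have h1Lp : 1 - L p = (1 - p) ^ ((α-1)/α) := by rw [hLp]; ring
  rw [hlam p ⟨hp0, hp1⟩, h1Lp, Real.log_rpow h1p]
  rw [mul_div_assoc, div_self hlog1p, mul_one]
  field_simp
  ring
end

section
/- Let X be a positive random variable with finite positive mean μ, continuous strictly increasing distribution function F on (x₀, ∞), and Lorenz curve L(p) = (1/μ)∫₀ᵖ F⁻¹(t) dt. If there exists a constant k ∈ (0,1) such that 1 - L(p) = (1-p)^k for all p ∈ (0,1), then F⁻¹(p) = μ k (1-p)^(k-1) for all p ∈ (0,1), i.e., F is a Type I Pareto distribution function with tail index α = 1/(1-k). -/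
open Real MeasureTheory ProbabilityTheory intervalIntegral Filter

/-- If the Lorenz curve of a positive random variable with finite positive mean and
continuous strictly increasing distribution function on `(x₀,∞)` satisfies
`1 - L(p) = (1-p)^k` for a constant `k ∈ (0,1)`, then the quantile function is
`F⁻¹(p) = μ k (1-p)^{k-1}`, i.e. `F` is Type I Pareto with tail index `1/(1-k)`. -/
theorem pareto_characterization
    {Ω : Type*} [MeasureSpace Ω] [IsProbabilityMeasure (ℙ : Measure Ω)]
    (X : Ω → ℝ) (hX : Measurable X) (hXpos : ∀ᵐ ω, 0 < X ω)
    (hXint : Integrable X) (μ : ℝ) (hμ : μ = ∫ ω, X ω) (hμpos : 0 < μ)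
    (F : ℝ → ℝ) (hF : ∀ x, F x = (ℙ {ω | X ω ≤ x}).toReal)
    (x₀ : ℝ) (hFcont : ContinuousOn F (Set.Ioi x₀))
    (hFmono : StrictMonoOn F (Set.Ioi x₀))
    (Finv : ℝ → ℝ) (hFinv : ∀ p, Finv p = sInf {x : ℝ | p ≤ F x})
    (L : ℝ → ℝ) (hL : ∀ p ∈ Set.Ioo (0:ℝ) 1, L p = (1/μ) * ∫ t in (0:ℝ)..p, Finv t)
    (k : ℝ) (hk : k ∈ Set.Ioo (0:ℝ) 1)
    (hconst : ∀ p ∈ Set.Ioo (0:ℝ) 1, 1 - L p = (1 - p) ^ k) :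
    ∀ p ∈ Set.Ioo (0:ℝ) 1, Finv p = μ * k * (1 - p) ^ (k - 1) := by
  obtain ⟨hk0, hk1⟩ := hk
  -- F vanishes on nonpositive reals
  have hF0 : ∀ x ≤ (0:ℝ), F x = 0 := by
    intro x hx
    rw [hF x]
    have h0 : ℙ {ω | ¬ 0 < X ω} = 0 := ae_iff.mp hXpos
    have : ℙ {ω | X ω ≤ x} = 0 :=
      measure_mono_null (fun ω (h : X ω ≤ x) => not_lt.mpr (h.trans hx)) h0
    simp [this]
  -- the sets used to define Finv are nonempty for t < 1
  have hne : ∀ t : ℝ, t < 1 → ∃ x, t ≤ F x := by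
    intro t ht
    have hpm : IsProbabilityMeasure (Measure.map X ℙ) :=
      Measure.isProbabilityMeasure_map hX.aemeasurable
    have hcdf : ∀ x, cdf (Measure.map X ℙ) x = F x := by
      intro x
      rw [cdf_eq_real, hF x, measureReal_def, Measure.map_apply hX measurableSet_Iic]
      rfl
    have h := (tendsto_cdf_atTop (Measure.map X ℙ)).eventually (eventually_gt_nhds ht)
    obtain ⟨x, hx⟩ := h.exists
    exact ⟨x, by rw [← hcdf x]; exact hx.le⟩
  have hbdd : ∀ t : ℝ, 0 < t → BddBelow {x : ℝ | t ≤ F x} := by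
    intro t ht
    refine ⟨0, fun x hx => ?_⟩
    by_contra hneg
    push_neg at hneg
    have := hF0 x hneg.le
    simp only [Set.mem_setOf_eq] at hx
    linarith
  have hFinv_nonneg : ∀ t ∈ Set.Ioo (0:ℝ) 1, 0 ≤ Finv t := by
    intro t ht
    rw [hFinv t]
    refine le_csInf ?_ ?_
    · obtain ⟨x, hx⟩ := hne t ht.2; exact ⟨x, hx⟩
    · intro b hb
      by_contra hneg
      push_neg at hneg
      have := hF0 b hneg.le
      simp only [Set.mem_setOf_eq] at hb
      linarith [ht.1]
  have hFinv0 : Finv 0 ≤ 0 := by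
    have hset : {x : ℝ | (0:ℝ) ≤ F x} = Set.univ := by
      ext x; simp [hF x, ENNReal.toReal_nonneg]
    have hnb : ¬ BddBelow (Set.univ : Set ℝ) := by
      rintro ⟨b, hb⟩
      have := hb (Set.mem_univ (b - 1))
      linarith
    rw [hFinv 0, hset, Real.sInf_of_not_bddBelow hnb]
  -- Finv is monotone on [0,1)
  have hmono : MonotoneOn Finv (Set.Ico (0:ℝ) 1) := by
    intro s hs t ht hst
    rcases eq_or_lt_of_le hs.1 with h0 | h0
    · rcases eq_or_lt_of_le hst with rfl | hst'
      · exact le_refl _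
      · have ht' : t ∈ Set.Ioo (0:ℝ) 1 := ⟨h0 ▸ hst', ht.2⟩
        calc Finv s = Finv 0 := by rw [← h0]
          _ ≤ 0 := hFinv0
          _ ≤ Finv t := hFinv_nonneg t ht'
    · rw [hFinv s, hFinv t]
      refine csInf_le_csInf (hbdd s h0) ?_ ?_
      · obtain ⟨x, hx⟩ := hne t ht.2; exact ⟨x, hx⟩
      · intro x hx
        simp only [Set.mem_setOf_eq] at hx ⊢
        linarith
  -- interval integrability
  have hint : ∀ a b : ℝ, 0 ≤ a → a ≤ b → b < 1 → IntervalIntegrable Finv volume a b := by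
    intro a b ha hab hb
    refine MonotoneOn.intervalIntegrable (hmono.mono ?_)
    rw [Set.uIcc_of_le hab]
    intro x hx
    exact ⟨ha.trans hx.1, lt_of_le_of_lt hx.2 hb⟩
  -- the integral identity
  set g : ℝ → ℝ := fun q => μ * (1 - (1 - q) ^ k) with hg_def
  have hgI : ∀ q ∈ Set.Ioo (0:ℝ) 1, (∫ t in (0:ℝ)..q, Finv t) = g q := by
    intro q hq
    have h1 := hconst q hq
    rw [hL q hq] at h1
    have hμne : μ ≠ 0 := ne_of_gt hμpos
    simp only [hg_def]
    field_simp at h1 ⊢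
    linarith
  intro p hp
  have hp0 := hp.1
  have hp1 := hp.2
  -- derivative of g at p
  have hderiv : HasDerivAt g (μ * k * (1 - p) ^ (k - 1)) p := by
    have h1 : HasDerivAt (fun q : ℝ => 1 - q) (-1) p := by
      simpa using (hasDerivAt_id p).const_sub 1
    have h2 : HasDerivAt (fun x : ℝ => x ^ k) (k * (1 - p) ^ (k - 1)) (1 - p) :=
      Real.hasDerivAt_rpow_const (Or.inl (ne_of_gt (by linarith)))
    have h3 := h2.comp p h1
    have h4 := (h3.const_sub 1).const_mul μ
    refine h4.congr_deriv ?_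
    ring
  have hslope := hasDerivAt_iff_tendsto_slope.mp hderiv
  -- from the right: Finv p ≤ d
  have hR : Finv p ≤ μ * k * (1 - p) ^ (k - 1) := by
    have hTend : Tendsto (slope g p) (nhdsWithin p (Set.Ioi p))
        (nhds (μ * k * (1 - p) ^ (k - 1))) :=
      hslope.mono_left (nhdsWithin_mono p fun x hx => (Set.mem_Ioi.mp hx).ne')
    refine ge_of_tendsto hTend ?_
    filter_upwards [Ioo_mem_nhdsGT_of_mem (Set.mem_Ico.mpr ⟨le_refl p, hp1⟩)] with q hq
    have hq1 : p < q := hq.1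
    have hq2 : q < 1 := hq.2
    have hsub : g q - g p = ∫ t in p..q, Finv t := by
      rw [← hgI q ⟨hp0.trans hq1, hq2⟩, ← hgI p hp]
      exact integral_interval_sub_left (hint 0 q le_rfl (hp0.trans hq1).le hq2)
        (hint 0 p le_rfl hp0.le hp1)
    have hlow : (q - p) * Finv p ≤ ∫ t in p..q, Finv t := by
      have hc : (∫ t in p..q, (fun _ : ℝ => Finv p) t) = (q - p) * Finv p := by
        simp [mul_comm]
      rw [← hc]
      refine integral_mono_on hq1.le intervalIntegrable_const
        (hint p q hp0.le hq1.le hq2) ?_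
      intro x hx
      exact hmono ⟨hp0.le, hp1⟩ ⟨hp0.le.trans hx.1, lt_of_le_of_lt hx.2 hq2⟩ hx.1
    rw [slope_def_field]
    rw [le_div_iff₀ (by linarith)]
    rw [← hsub] at hlow
    linarith
  -- from the left: d ≤ Finv p
  have hLft : μ * k * (1 - p) ^ (k - 1) ≤ Finv p := by
    have hTend : Tendsto (slope g p) (nhdsWithin p (Set.Iio p))
        (nhds (μ * k * (1 - p) ^ (k - 1))) :=
      hslope.mono_left (nhdsWithin_mono p fun x hx => (Set.mem_Iio.mp hx).ne)
    refine le_of_tendsto hTend ?_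
    filter_upwards [Ioo_mem_nhdsLT_of_mem (Set.mem_Ioc.mpr ⟨hp0, le_refl p⟩)] with q hq
    have hq1 : 0 < q := hq.1
    have hq2 : q < p := hq.2
    have hsub : g p - g q = ∫ t in q..p, Finv t := by
      rw [← hgI q ⟨hq1, hq2.trans hp1⟩, ← hgI p hp]
      exact integral_interval_sub_left (hint 0 p le_rfl hp0.le hp1)
        (hint 0 q le_rfl hq1.le (hq2.trans hp1))
    have hup : (∫ t in q..p, Finv t) ≤ (p - q) * Finv p := by
      have hc : (∫ t in q..p, (fun _ : ℝ => Finv p) t) = (p - q) * Finv p := by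
        simp [mul_comm]
      rw [← hc]
      refine integral_mono_on hq2.le (hint q p hq1.le hq2.le hp1)
        intervalIntegrable_const ?_
      intro x hx
      exact hmono ⟨hq1.le.trans hx.1, lt_of_le_of_lt hx.2 hp1⟩ ⟨hp0.le, hp1⟩ hx.2
    have hslope_eq : slope g p q = (g p - g q) / (p - q) := by
      rw [slope_def_field, ← neg_sub (g p) (g q), ← neg_sub p q, neg_div_neg_eq]
    rw [hslope_eq, div_le_iff₀ (by linarith)]
    rw [← hsub] at hup
    linarith
  linarith
end
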